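/- Define g : (0,∞) → ℝ by g(r) := ( ln(r/(2+r)) + 1/r + 1/(2+r) )·( r²/2 + r³/6 ). Then for every r > 0, g(r) = ( ∫_r^∞ (Y + Y²/2)^{-2} dY )·( ∫_0^r (Y + Y²/2) dY ); moreover g is monotone increasing on (0,∞) and g(r) → 2/9 as r → ∞; in particular sup_{r>0} g(r) = 2/9. -/

import Mathlib

open Set MeasureTheory Filter
open scoped Topology

/-- The function `g(r) = (ln(r/(2+r)) + 1/r + 1/(2+r))·(r²/2 + r³/6)`. -/
noncomputable def gfun (r : ℝ) : ℝ :=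
  (Real.log (r / (2 + r)) + 1 / r + 1 / (2 + r)) * (r ^ 2 / 2 + r ^ 3 / 6)

/-!
Both factors have explicit antiderivatives: the tail integral is
`A(r) = log (r / (2 + r)) + 1/r + 1/(2 + r)` and the head integral is `B(r) = r²/2 + r³/6`.
With `w = r + r²/2` we get `(AB)' = A w - B / w²`, so monotonicity amounts to `B / w³ < A`.
Together with `A < 4 / (3 r³)` (from `w ≥ r²/2`) this squeezes `g = AB` between two rational
functions tending to `2/9`. Each bound on `A` holds because the difference of the two sides
vanishes at infinity and has a derivative of constant sign.
-/

open Real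

lemma tendsto_atTop_of_eq_comp_inv {f φ : ℝ → ℝ} {l : ℝ} (hφ : ContinuousAt φ 0) (hφ0 : φ 0 = l)
    (hf : ∀ r > 0, f r = φ r⁻¹) : Tendsto f atTop (𝓝 l) := by
  refine (hφ0 ▸ hφ.tendsto.comp tendsto_inv_atTop_zero).congr' ?_
  filter_upwards [eventually_gt_atTop 0] with r hr
  exact (hf r hr).symm

lemma MonotoneOn.isLUB_image_Ioi_of_tendsto_atTop {α β : Type*} [LinearOrder α] [NoMaxOrder α]
    [Preorder β] [TopologicalSpace β] [OrderClosedTopology β] {f : α → β} {a : α} {b : β}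
    (hf : MonotoneOn f (Ioi a)) (hb : Tendsto f atTop (𝓝 b)) : IsLUB (f '' Ioi a) b := by
  rw [image_eq_range]
  have : Nonempty (Ioi a) := nonempty_Ioi_subtype
  exact isLUB_of_tendsto_atTop (fun x y hxy => hf x.2 y.2 hxy) (tendsto_comp_val_Ioi_atTop.2 hb)

lemma lt_of_hasDerivAt_lt_of_tendsto_atTop {f g f' g' : ℝ → ℝ} {a l r : ℝ}
    (hf : ∀ x ∈ Ioi a, HasDerivAt f (f' x) x) (hg : ∀ x ∈ Ioi a, HasDerivAt g (g' x) x)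
    (hlt : ∀ x ∈ Ioi a, f' x < g' x) (hfl : Tendsto f atTop (𝓝 l)) (hgl : Tendsto g atTop (𝓝 l))
    (hr : a < r) : g r < f r := by
  have hd : ∀ x ∈ Ioi a, HasDerivAt (fun y => f y - g y) (f' x - g' x) x :=
    fun x hx => (hf x hx).sub (hg x hx)
  have hanti : StrictAntiOn (fun y => f y - g y) (Ioi a) := by
    refine strictAntiOn_of_hasDerivWithinAt_neg (f' := fun x => f' x - g' x) (convex_Ioi a)
      (fun x hx => (hd x hx).continuousAt.continuousWithinAt) (fun x hx => ?_) (fun x hx => ?_)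
    · rw [interior_Ioi] at hx ⊢
      exact (hd x hx).hasDerivWithinAt
    · rw [interior_Ioi] at hx
      exact sub_neg.2 (hlt x hx)
  have hr1 : 0 ≤ f (r + 1) - g (r + 1) := by
    refine Antitone.le_of_tendsto (f := fun x : Ioi a => f x - g x)
      (fun x y hxy => hanti.antitoneOn x.2 y.2 hxy)
      (tendsto_comp_val_Ioi_atTop.2 (by simpa using hfl.sub hgl)) ⟨r + 1, ?_⟩
    simp only [mem_Ioi]; linarith
  have := hanti (show r ∈ Ioi a from hr) (show r + 1 ∈ Ioi a by simp only [mem_Ioi]; linarith)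
    (lt_add_one r)
  simp only at this
  linarith

noncomputable def hardyTail (r : ℝ) : ℝ := log (r / (2 + r)) + 1 / r + 1 / (2 + r)

noncomputable def hardyHead (r : ℝ) : ℝ := r ^ 2 / 2 + r ^ 3 / 6

lemma hasDerivAt_hardyTail {x : ℝ} (hx : 0 < x) :
    HasDerivAt hardyTail (-((x + x ^ 2 / 2) ^ 2)⁻¹) x := by
  have h2x : 0 < 2 + x := by linarith
  have hid := hasDerivAt_id' x
  have h := (((hid.fun_div (hid.const_add 2) h2x.ne').log (div_pos hx h2x).ne').add
    ((hasDerivAt_const x (1 : ℝ)).div hid hx.ne')).add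
    ((hasDerivAt_const x (1 : ℝ)).div (hid.const_add 2) h2x.ne')
  refine HasDerivAt.congr_deriv (f := hardyTail) h ?_
  field_simp
  ring

lemma hasDerivAt_hardyHead (x : ℝ) : HasDerivAt hardyHead (x + x ^ 2 / 2) x := by
  have := ((hasDerivAt_pow 2 x).div_const 2).add ((hasDerivAt_pow 3 x).div_const 6)
  refine HasDerivAt.congr_deriv (f := hardyHead) this ?_
  push_cast
  ring

lemma tendsto_hardyTail_atTop : Tendsto hardyTail atTop (𝓝 0) := by
  refine tendsto_atTop_of_eq_comp_inv (φ := fun t => log (1 / (1 + 2 * t)) + t + t / (1 + 2 * t))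
    (by fun_prop (disch := norm_num)) (by simp) (fun r _ => ?_)
  have h : 1 / (1 + 2 * r⁻¹) = r / (2 + r) := by field_simp; ring
  rw [h, hardyTail]
  field_simp
  ring

lemma integral_Ioi_inv_sq_eq_hardyTail {r : ℝ} (hr : 0 < r) :
    ∫ Y in Ioi r, ((Y + Y ^ 2 / 2) ^ 2)⁻¹ = hardyTail r := by
  have := integral_Ioi_of_hasDerivAt_of_nonneg (g := fun y => -hardyTail y)
    (hasDerivAt_hardyTail hr).neg.continuousAt.continuousWithinAt
    (fun x hx => neg_neg ((x + x ^ 2 / 2) ^ 2)⁻¹ ▸ (hasDerivAt_hardyTail (hr.trans hx)).neg)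
    (fun x _ => by positivity) (by simpa using tendsto_hardyTail_atTop.neg)
  simpa using this

lemma integral_Ioo_eq_hardyHead {r : ℝ} (hr : 0 ≤ r) :
    ∫ Y in Ioo 0 r, (Y + Y ^ 2 / 2) = hardyHead r := by
  rw [← integral_Ioc_eq_integral_Ioo, ← intervalIntegral.integral_of_le hr,
    intervalIntegral.integral_eq_sub_of_hasDerivAt (fun x _ => hasDerivAt_hardyHead x)
      ((by fun_prop : Continuous fun Y : ℝ => Y + Y ^ 2 / 2).intervalIntegrable _ _)]
  simp [hardyHead]

-- The left side is `B(r) / w(r)³` in the notation of the header.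
lemma div_lt_hardyTail {r : ℝ} (hr : 0 < r) :
    4 * (3 + r) / (3 * r * (2 + r) ^ 3) < hardyTail r := by
  refine lt_of_hasDerivAt_lt_of_tendsto_atTop (a := 0)
    (g := fun x => 4 * (3 + x) / (3 * x * (2 + x) ^ 3))
    (g' := fun x => -((x + x ^ 2 / 2) ^ 2)⁻¹ + 8 / (x ^ 2 * (2 + x) ^ 4))
    (fun x hx => hasDerivAt_hardyTail hx) (fun x (hx : 0 < x) => ?_)
    (fun x (hx : 0 < x) => by linarith [show 0 < 8 / (x ^ 2 * (2 + x) ^ 4) by positivity])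
    tendsto_hardyTail_atTop ?_ hr
  · have h2x : 0 < 2 + x := by linarith
    have hid := hasDerivAt_id' x
    refine (((hid.const_add 3).const_mul 4).fun_div
      ((hid.const_mul 3).fun_mul ((hid.const_add 2).fun_pow 3)) (by positivity)).congr_deriv ?_
    field_simp
    ring
  · refine tendsto_atTop_of_eq_comp_inv
      (φ := fun t => 4 * (3 * t + 1) * t ^ 3 / (3 * (1 + 2 * t) ^ 3))
      (by fun_prop (disch := norm_num)) (by simp) (fun r _ => ?_)
    field_simp
    ring

lemma hardyTail_lt_div {r : ℝ} (hr : 0 < r) : hardyTail r < 4 / (3 * r ^ 3) := by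
  refine lt_of_hasDerivAt_lt_of_tendsto_atTop (a := 0) (f := fun x => 4 / (3 * x ^ 3))
    (f' := fun x => -(4 / x ^ 4))
    (fun x (hx : 0 < x) => ?_) (fun x hx => hasDerivAt_hardyTail hx) (fun x (hx : 0 < x) => ?_)
    ?_ tendsto_hardyTail_atTop hr
  · refine ((hasDerivAt_const x (4 : ℝ)).div ((hasDerivAt_pow 3 x).const_mul 3)
      (by positivity)).congr_deriv ?_
    field_simp
    ring
  · rw [neg_lt_neg_iff, inv_eq_one_div, div_lt_div_iff₀ (by positivity) (by positivity)]
    nlinarith [pow_pos hx 2, pow_pos hx 3]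
  · refine tendsto_atTop_of_eq_comp_inv (φ := fun t => 4 * t ^ 3 / 3)
      (by fun_prop) (by simp) (fun r _ => ?_)
    field_simp

lemma hasDerivAt_gfun {x : ℝ} (hx : 0 < x) :
    HasDerivAt gfun (hardyTail x * (x + x ^ 2 / 2) - ((x + x ^ 2 / 2) ^ 2)⁻¹ * hardyHead x) x :=
  HasDerivAt.congr_deriv (f := gfun) ((hasDerivAt_hardyTail hx).mul (hasDerivAt_hardyHead x))
    (by simp only [hardyHead]; ring)

lemma strictMonoOn_gfun : StrictMonoOn gfun (Ioi 0) := by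
  refine strictMonoOn_of_hasDerivWithinAt_pos (convex_Ioi 0)
    (f' := fun x => hardyTail x * (x + x ^ 2 / 2) - ((x + x ^ 2 / 2) ^ 2)⁻¹ * hardyHead x)
    (fun x hx => (hasDerivAt_gfun hx).continuousAt.continuousWithinAt)
    (fun x hx => ?_) (fun x hx => ?_) <;> rw [interior_Ioi] at *
  · exact (hasDerivAt_gfun hx).hasDerivWithinAt
  · have hx : 0 < x := hx
    have hw : 0 < x + x ^ 2 / 2 := by positivity
    have hthreshold : ((x + x ^ 2 / 2) ^ 2)⁻¹ * hardyHead x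
        = 4 * (3 + x) / (3 * x * (2 + x) ^ 3) * (x + x ^ 2 / 2) := by
      rw [hardyHead]
      field_simp
      ring
    rw [sub_pos, hthreshold]
    exact mul_lt_mul_of_pos_right (div_lt_hardyTail hx) hw

lemma tendsto_gfun_atTop : Tendsto gfun atTop (𝓝 (2 / 9)) := by
  have hlower : Tendsto (fun r => 4 * (3 + r) / (3 * r * (2 + r) ^ 3) * hardyHead r) atTop
      (𝓝 (2 / 9)) := by
    refine tendsto_atTop_of_eq_comp_inv (φ := fun t => 2 * (1 + 3 * t) ^ 2 / (9 * (1 + 2 * t) ^ 3))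
      (by fun_prop (disch := norm_num)) (by norm_num) (fun r _ => ?_)
    rw [hardyHead]
    field_simp
    ring
  have hupper : Tendsto (fun r => 4 / (3 * r ^ 3) * hardyHead r) atTop (𝓝 (2 / 9)) := by
    refine tendsto_atTop_of_eq_comp_inv (φ := fun t => 2 * (1 + 3 * t) / 9)
      (by fun_prop) (by norm_num) (fun r _ => ?_)
    rw [hardyHead]
    field_simp
    ring
  have hhead : ∀ᶠ r in atTop, 0 ≤ hardyHead r := by
    filter_upwards [eventually_ge_atTop 0] with r hr
    rw [hardyHead]
    positivity
  refine tendsto_of_tendsto_of_tendsto_of_le_of_le' hlower hupper ?_ ?_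
  · filter_upwards [eventually_gt_atTop 0, hhead] with r hr hr'
    exact mul_le_mul_of_nonneg_right (div_lt_hardyTail hr).le hr'
  · filter_upwards [eventually_gt_atTop 0, hhead] with r hr hr'
    exact mul_le_mul_of_nonneg_right (hardyTail_lt_div hr).le hr'

/-- `g(r)` equals the product `(∫_r^∞ (Y+Y²/2)^{-2} dY)·(∫_0^r (Y+Y²/2) dY)`, is monotone
increasing on `(0,∞)`, converges to `2/9` at infinity, and `sup_{r>0} g(r) = 2/9`. -/
theorem hardy_g_properties :
    (∀ r : ℝ, 0 < r →
      gfun r = (∫ Y in Ioi r, ((Y + Y ^ 2 / 2) ^ 2)⁻¹) * ∫ Y in Ioo (0:ℝ) r, (Y + Y ^ 2 / 2))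
    ∧ MonotoneOn gfun (Ioi 0)
    ∧ Tendsto gfun atTop (nhds (2 / 9))
    ∧ IsLUB (gfun '' Ioi 0) (2 / 9) := by
  refine ⟨fun r hr => ?_, strictMonoOn_gfun.monotoneOn, tendsto_gfun_atTop,
    strictMonoOn_gfun.monotoneOn.isLUB_image_Ioi_of_tendsto_atTop tendsto_gfun_atTop⟩
  rw [integral_Ioi_inv_sq_eq_hardyTail hr, integral_Ioo_eq_hardyHead hr.le]
  rfl
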